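/- For any 𝒮-measurable real random variables β and S and any ℋ-measurable real random variable c (with all displayed expressions integrable), the expectation of the marginal estimating function is E[ e^{−Aβ} · (Y − e^{c + Aβ}) · J · (A − p̃) · S ] = E[ p̃·(1 − p̃) · S · ( e^{−β} · p⁻¹ · E[A·Π·Y | ℋ] − (1 − p)⁻¹ · E[(1−A)·Π·Y | ℋ] ) ], where Π := ∏_{j=1}^{Δ−1} (1 − A_j)/(1 − p_j) and J := (p̃/p)^{A} · ((1 − p̃)/(1 − p))^{1−A} · Π. In particular, the working-model term contributes nothing: E[ e^{c} · J · (A − p̃) · S ] = 0. -/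

import Mathlib

/-!
Each factor `(1 - A_j) / (1 - p_j)` of `Π` has conditional mean one given `ℳ_j` and is bounded
by `δ⁻¹`, so conditioning successively on `ℳ_{Δ-1}, …, ℳ₁` gives `E[Π | ℳ₁] = 1`; hence
`E[A Π | ℋ] = p` and `E[(1 - A) Π | ℋ] = 1 - p`. For binary `A` the weight satisfies
`J (A - p̃) = p̃ (1 - p̃) (A / p - (1 - A) / (1 - p)) Π`, and `e^{-Aβ} A = e^{-β} A`,
`e^{-Aβ} (1 - A) = 1 - A`. Pulling the `ℋ`-measurable coefficients out of the two arms, the working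
term becomes `E[e^c p̃ (1 - p̃) S (p / p - (1 - p) / (1 - p))] = 0` and the outcome term becomes
the right-hand side.
-/

open MeasureTheory Real

variable {Ω : Type*}

/-- `Π := ∏_{j=1}^{Δ−1} (1 − A_j)/(1 − p_j)`, where `p_j := E[A_j | ℳ_j]`
(empty product `= 1` when `Δ = 1`). -/
noncomputable def PiProd {m0 : MeasurableSpace Ω} (μ : Measure Ω)
    (M : ℕ → MeasurableSpace Ω) (Δ : ℕ) (Aseq : ℕ → Ω → ℝ) : Ω → ℝ :=
  fun ω => ∏ j ∈ Finset.Icc 1 (Δ - 1), (1 - Aseq j ω) / (1 - (μ[Aseq j|M j]) ω)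

/-- `J := (p̃/p)^A · ((1 − p̃)/(1 − p))^{1−A} · Π`, where `p := E[A | ℋ]`. -/
noncomputable def Jweight {m0 : MeasurableSpace Ω} (μ : Measure Ω)
    (mH : MeasurableSpace Ω) (M : ℕ → MeasurableSpace Ω) (Δ : ℕ)
    (A : Ω → ℝ) (Aseq : ℕ → Ω → ℝ) (ptil : Ω → ℝ) : Ω → ℝ :=
  fun ω => (ptil ω / (μ[A|mH]) ω) ^ (A ω) *
    ((1 - ptil ω) / (1 - (μ[A|mH]) ω)) ^ (1 - A ω) * PiProd μ M Δ Aseq ω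

section CondExp

variable {m m0 : MeasurableSpace Ω} {μ : Measure Ω}

theorem condExp_one_sub [IsFiniteMeasure μ] (hm : m ≤ m0) {f : Ω → ℝ} (hf : Integrable f μ) :
    μ[(fun ω => 1 - f ω)|m] =ᵐ[μ] fun ω => 1 - μ[f|m] ω := by
  filter_upwards [condExp_sub (integrable_const (1 : ℝ)) hf m] with ω hω
  exact hω.trans (by simp [condExp_const hm])

theorem integral_mul_condExp [IsFiniteMeasure μ] (hm : m ≤ m0) {g X : Ω → ℝ}
    (hg : StronglyMeasurable[m] g) (hgX : Integrable (fun ω => g ω * X ω) μ)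
    (hX : Integrable X μ) :
    ∫ ω, g ω * X ω ∂μ = ∫ ω, g ω * μ[X|m] ω ∂μ :=
  calc ∫ ω, g ω * X ω ∂μ = ∫ ω, μ[g * X|m] ω ∂μ := (integral_condExp hm).symm
    _ = ∫ ω, g ω * μ[X|m] ω ∂μ :=
      integral_congr_ae (condExp_mul_of_stronglyMeasurable_left hg hgX hX)

theorem integrable_mul_condExp {g X : Ω → ℝ} (hg : StronglyMeasurable[m] g)
    (hgX : Integrable (fun ω => g ω * X ω) μ) (hX : Integrable X μ) :
    Integrable (fun ω => g ω * μ[X|m] ω) μ :=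
  integrable_condExp.congr (condExp_mul_of_stronglyMeasurable_left hg hgX hX)

theorem condExp_mul_eq_condExp_of_condExp_eq_one [IsFiniteMeasure μ] {n : MeasurableSpace Ω}
    (hmn : m ≤ n) (hn : n ≤ m0) {B P : Ω → ℝ} (hB : StronglyMeasurable[n] B)
    (hBP : Integrable (fun ω => B ω * P ω) μ) (hP : Integrable P μ) (hP1 : μ[P|n] =ᵐ[μ] 1) :
    μ[(fun ω => B ω * P ω)|m] =ᵐ[μ] μ[B|m] := by
  refine (condExp_condExp_of_le hmn hn).symm.trans (condExp_congr_ae ?_)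
  filter_upwards [condExp_mul_of_stronglyMeasurable_left hB hBP hP, hP1] with ω h h1
  exact h.trans (by simp [h1])

theorem condExp_one_sub_div_one_sub_condExp_eq_one [IsFiniteMeasure μ] (hm : m ≤ m0) {A : Ω → ℝ}
    (hA : Integrable A μ) {δ : ℝ} (hδ : 0 < δ) (hp : ∀ᵐ ω ∂μ, μ[A|m] ω ≤ 1 - δ) :
    μ[(fun ω => (1 - A ω) / (1 - μ[A|m] ω))|m] =ᵐ[μ] 1 := by
  set w : Ω → ℝ := fun ω => (1 - μ[A|m] ω)⁻¹
  have hw : StronglyMeasurable[m] w :=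
    (measurable_const.sub stronglyMeasurable_condExp.measurable).inv.stronglyMeasurable
  have hwbdd : ∀ᵐ ω ∂μ, ‖w ω‖ ≤ δ⁻¹ := by
    filter_upwards [hp] with ω hω
    rw [norm_inv, Real.norm_of_nonneg (by linarith)]
    exact inv_anti₀ hδ (by linarith)
  have h1A : Integrable (fun ω => 1 - A ω) μ := (integrable_const 1).sub hA
  have hwA : Integrable (w * fun ω => 1 - A ω) μ :=
    h1A.bdd_mul (hw.mono hm).aestronglyMeasurable hwbdd
  have hdiv : (fun ω => (1 - A ω) / (1 - μ[A|m] ω)) = w * fun ω => 1 - A ω :=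
    funext fun ω => div_eq_inv_mul _ _
  rw [hdiv]
  filter_upwards [condExp_mul_of_stronglyMeasurable_left hw hwA h1A, condExp_one_sub hm hA, hp]
    with ω h h1 hω
  rw [h, Pi.mul_apply, h1]
  exact inv_mul_cancel₀ (by linarith)

theorem integral_mul_sub_mul_eq_integral_condExp [IsFiniteMeasure μ] (hm : m ≤ m0) {A g h X : Ω → ℝ}
    (hA : AEStronglyMeasurable[m0] A μ) (hA01 : ∀ ω, A ω = 0 ∨ A ω = 1)
    (hg : StronglyMeasurable[m] g) (hh : StronglyMeasurable[m] h)
    (hX1 : Integrable (fun ω => A ω * X ω) μ) (hX0 : Integrable (fun ω => (1 - A ω) * X ω) μ)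
    (hint : Integrable (fun ω => g ω * (A ω * X ω) - h ω * ((1 - A ω) * X ω)) μ) :
    ∫ ω, g ω * (A ω * X ω) - h ω * ((1 - A ω) * X ω) ∂μ
      = ∫ ω, g ω * μ[(fun ω => A ω * X ω)|m] ω - h ω * μ[(fun ω => (1 - A ω) * X ω)|m] ω ∂μ := by
  -- `A` is binary, so multiplying the integrand by `A` keeps exactly its first term.
  have h1 : Integrable (fun ω => g ω * (A ω * X ω)) μ :=
    (hint.bdd_mul hA (c := 1) (ae_of_all _ fun ω => by rcases hA01 ω with h | h <;> simp [h])).congr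
      (ae_of_all _ fun ω => by rcases hA01 ω with h | h <;> simp [h])
  have h0 : Integrable (fun ω => h ω * ((1 - A ω) * X ω)) μ :=
    (h1.sub hint).congr (ae_of_all _ fun ω => by simp only [Pi.sub_apply]; ring)
  rw [integral_sub h1 h0, integral_mul_condExp hm hg h1 hX1, integral_mul_condExp hm hh h0 hX0,
    integral_sub (integrable_mul_condExp hg h1 hX1) (integrable_mul_condExp hh h0 hX0)]

end CondExp

theorem integrable_and_condExp_prod_Icc_eq_one {m0 : MeasurableSpace Ω} {μ : Measure Ω}
    [IsFiniteMeasure μ] {M : ℕ → MeasurableSpace Ω} {F : ℕ → Ω → ℝ} {n : ℕ}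
    (hM : MonotoneOn M (Set.Icc 1 (n + 1))) (hMle : M (n + 1) ≤ m0)
    (hF : ∀ j ∈ Finset.Icc 1 n, StronglyMeasurable[M (j + 1)] (F j))
    (hFbdd : ∀ j ∈ Finset.Icc 1 n, ∃ C, ∀ᵐ ω ∂μ, ‖F j ω‖ ≤ C)
    (hFcond : ∀ j ∈ Finset.Icc 1 n, μ[F j|M j] =ᵐ[μ] 1) :
    Integrable (fun ω => ∏ j ∈ Finset.Icc 1 n, F j ω) μ ∧
      μ[(fun ω => ∏ j ∈ Finset.Icc 1 n, F j ω)|M 1] =ᵐ[μ] 1 := by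
  have hMmono : ∀ {i j}, 1 ≤ i → i ≤ j → j ≤ n + 1 → M i ≤ M j := fun hi hij hj =>
    hM ⟨hi, hij.trans hj⟩ ⟨hi.trans hij, hj⟩ hij
  have hMle' : ∀ {j}, 1 ≤ j → j ≤ n + 1 → M j ≤ m0 := fun hj hjn =>
    (hMmono hj hjn le_rfl).trans hMle
  suffices ∀ k ≤ n, Integrable (fun ω => ∏ j ∈ Finset.Icc 1 k, F j ω) μ ∧
      μ[(fun ω => ∏ j ∈ Finset.Icc 1 k, F j ω)|M 1] =ᵐ[μ] 1 from this n le_rfl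
  intro k hk
  induction k with
  | zero =>
    simp only [Finset.Icc_eq_empty_of_lt zero_lt_one, Finset.prod_empty]
    exact ⟨integrable_const 1, (condExp_const (hMle' le_rfl (by omega)) (1 : ℝ)).eventuallyEq⟩
  | succ k ih =>
    obtain ⟨hint, hcond⟩ := ih (by omega)
    have hmem : k + 1 ∈ Finset.Icc 1 n := Finset.mem_Icc.mpr ⟨by omega, hk⟩
    obtain ⟨C, hC⟩ := hFbdd _ hmem
    have hFk : AEStronglyMeasurable (F (k + 1)) μ :=
      ((hF _ hmem).mono (hMle' (by omega) (by omega))).aestronglyMeasurable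
    have hsucc : (fun ω => ∏ j ∈ Finset.Icc 1 (k + 1), F j ω)
        = (fun ω => ∏ j ∈ Finset.Icc 1 k, F j ω) * F (k + 1) :=
      funext fun ω => Finset.prod_Icc_succ_top (by omega) _
    have hprod : StronglyMeasurable[M (k + 1)] fun ω => ∏ j ∈ Finset.Icc 1 k, F j ω :=
      Finset.stronglyMeasurable_fun_prod _ fun j hj => by
        obtain ⟨hj1, hjk⟩ := Finset.mem_Icc.mp hj
        exact (hF j (Finset.Icc_subset_Icc_right (by omega) hj)).mono
          (hMmono (by omega) (by omega) (by omega))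
    have hintSucc : Integrable (fun ω => ∏ j ∈ Finset.Icc 1 (k + 1), F j ω) μ := by
      rw [hsucc]
      exact hint.mul_bdd hFk hC
    refine ⟨hintSucc, ?_⟩
    calc μ[(fun ω => ∏ j ∈ Finset.Icc 1 (k + 1), F j ω)|M 1]
        =ᵐ[μ] μ[μ[(fun ω => ∏ j ∈ Finset.Icc 1 (k + 1), F j ω)|M (k + 1)]|M 1] :=
          (condExp_condExp_of_le (hMmono le_rfl (by omega) (by omega))
            (hMle' (by omega) (by omega))).symm
      _ =ᵐ[μ] μ[(fun ω => ∏ j ∈ Finset.Icc 1 k, F j ω)|M 1] := by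
          refine condExp_congr_ae ?_
          rw [hsucc] at hintSucc ⊢
          filter_upwards
            [condExp_mul_of_stronglyMeasurable_left hprod hintSucc (.of_bound hFk C hC),
              hFcond _ hmem] with ω h h1
          simp [h, h1]
      _ =ᵐ[μ] 1 := hcond

theorem norm_one_sub_div_one_sub_le_inv {a q δ : ℝ} (ha : a ∈ Set.Icc 0 1) (hδ : 0 < δ)
    (hq : q ≤ 1 - δ) : ‖(1 - a) / (1 - q)‖ ≤ δ⁻¹ := by
  rw [norm_div, Real.norm_of_nonneg (by linarith [ha.2]), Real.norm_of_nonneg (by linarith),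
    ← one_div]
  exact div_le_div₀ zero_le_one (by linarith [ha.1]) hδ (by linarith)

theorem integrable_and_condExp_PiProd_eq_one {m0 : MeasurableSpace Ω} {μ : Measure Ω}
    [IsFiniteMeasure μ] {M : ℕ → MeasurableSpace Ω} {Δ : ℕ} {Aseq : ℕ → Ω → ℝ} {δ : ℝ}
    (hΔ : 1 ≤ Δ) (hM : MonotoneOn M (Set.Icc 1 Δ)) (hMΔ : M Δ ≤ m0)
    (hAseq : ∀ j ∈ Finset.Icc 1 (Δ - 1), Measurable[M (j + 1)] (Aseq j))
    (hAseq01 : ∀ j ∈ Finset.Icc 1 (Δ - 1), ∀ ω, Aseq j ω = 0 ∨ Aseq j ω = 1)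
    (hδ : 0 < δ) (hpj : ∀ j ∈ Finset.Icc 1 (Δ - 1), ∀ᵐ ω ∂μ, (μ[Aseq j|M j]) ω ≤ 1 - δ) :
    Integrable (PiProd μ M Δ Aseq) μ ∧ μ[PiProd μ M Δ Aseq|M 1] =ᵐ[μ] 1 := by
  obtain ⟨n, rfl⟩ : ∃ n, Δ = n + 1 := ⟨Δ - 1, by omega⟩
  simp only [Nat.add_sub_cancel] at hAseq hAseq01 hpj
  have hMj : ∀ j ∈ Finset.Icc 1 n, M j ≤ M (j + 1) ∧ M (j + 1) ≤ m0 := fun j hj => by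
    obtain ⟨hj1, hjn⟩ := Finset.mem_Icc.mp hj
    exact ⟨hM ⟨hj1, by omega⟩ ⟨by omega, by omega⟩ (by omega),
      (hM ⟨by omega, by omega⟩ ⟨by omega, le_rfl⟩ (by omega)).trans hMΔ⟩
  have hA01 : ∀ j ∈ Finset.Icc 1 n, ∀ ω, Aseq j ω ∈ Set.Icc 0 1 := fun j hj ω => by
    rcases hAseq01 j hj ω with h | h <;> simp [h]
  exact integrable_and_condExp_prod_Icc_eq_one hM hMΔ
    (fun j hj => ((measurable_const.sub (hAseq j hj)).div (measurable_const.sub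
      (stronglyMeasurable_condExp.measurable.mono (hMj j hj).1 le_rfl))).stronglyMeasurable)
    (fun j hj => ⟨δ⁻¹, by
      filter_upwards [hpj j hj] with ω hω
      exact norm_one_sub_div_one_sub_le_inv (hA01 j hj ω) hδ hω⟩)
    (fun j hj => condExp_one_sub_div_one_sub_condExp_eq_one ((hMj j hj).1.trans (hMj j hj).2)
      (.of_bound (((hAseq j hj).mono (hMj j hj).2 le_rfl).aestronglyMeasurable) 1
        (ae_of_all _ fun ω => by
          rw [Real.norm_of_nonneg (hA01 j hj ω).1]; exact (hA01 j hj ω).2))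
      hδ (hpj j hj))

theorem Jweight_mul_sub {m0 : MeasurableSpace Ω} (μ : Measure Ω) (mH : MeasurableSpace Ω)
    (M : ℕ → MeasurableSpace Ω) (Δ : ℕ) (Aseq : ℕ → Ω → ℝ) (ptil : Ω → ℝ) {A : Ω → ℝ} {ω : Ω}
    (hA : A ω = 0 ∨ A ω = 1) :
    Jweight μ mH M Δ A Aseq ptil ω * (A ω - ptil ω)
      = ptil ω * (1 - ptil ω) * (A ω / (μ[A|mH]) ω - (1 - A ω) / (1 - (μ[A|mH]) ω)) *
        PiProd μ M Δ Aseq ω := by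
  rcases hA with h | h <;> simp only [Jweight, h, rpow_zero, rpow_one, sub_zero, sub_self] <;> ring

theorem integral_mul_Jweight_mul_sub_eq_zero {m0 : MeasurableSpace Ω} {μ : Measure Ω}
    [IsFiniteMeasure μ] {mH n : MeasurableSpace Ω} {M : ℕ → MeasurableSpace Ω} {Δ : ℕ}
    {A k ptil : Ω → ℝ} {Aseq : ℕ → Ω → ℝ} (hmn : mH ≤ n) (hn : n ≤ m0)
    (hA : StronglyMeasurable[n] A) (hA01 : ∀ ω, A ω = 0 ∨ A ω = 1)
    (hp : ∀ᵐ ω ∂μ, 0 < (μ[A|mH]) ω ∧ (μ[A|mH]) ω < 1)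
    (hk : StronglyMeasurable[mH] k) (hptil : StronglyMeasurable[mH] ptil)
    (hPi : Integrable (PiProd μ M Δ Aseq) μ) (hPi1 : μ[PiProd μ M Δ Aseq|n] =ᵐ[μ] 1)
    (hint : Integrable (fun ω => k ω * Jweight μ mH M Δ A Aseq ptil ω * (A ω - ptil ω)) μ) :
    ∫ ω, k ω * Jweight μ mH M Δ A Aseq ptil ω * (A ω - ptil ω) ∂μ = 0 := by
  have hA' : AEStronglyMeasurable[m0] A μ := (hA.mono hn).aestronglyMeasurable
  have hAbdd : ∀ ω, ‖A ω‖ ≤ 1 ∧ ‖1 - A ω‖ ≤ 1 := fun ω => by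
    rcases hA01 ω with h | h <;> simp [h]
  have hAPi : Integrable (fun ω => A ω * PiProd μ M Δ Aseq ω) μ :=
    hPi.bdd_mul hA' (ae_of_all _ fun ω => (hAbdd ω).1)
  have h1APi : Integrable (fun ω => (1 - A ω) * PiProd μ M Δ Aseq ω) μ :=
    hPi.bdd_mul (aestronglyMeasurable_const.sub hA') (ae_of_all _ fun ω => (hAbdd ω).2)
  have hE1 := condExp_mul_eq_condExp_of_condExp_eq_one hmn hn hA hAPi hPi hPi1
  have hE0 := (condExp_mul_eq_condExp_of_condExp_eq_one (B := fun ω => 1 - A ω) hmn hn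
    (stronglyMeasurable_const.sub hA) h1APi hPi hPi1).trans
    (condExp_one_sub (hmn.trans hn) (.of_bound hA' 1 (ae_of_all _ fun ω => (hAbdd ω).1)))
  have hsplit : ∀ ω, k ω * Jweight μ mH M Δ A Aseq ptil ω * (A ω - ptil ω)
      = k ω * ptil ω * (1 - ptil ω) / (μ[A|mH]) ω * (A ω * PiProd μ M Δ Aseq ω)
        - k ω * ptil ω * (1 - ptil ω) / (1 - (μ[A|mH]) ω) * ((1 - A ω) * PiProd μ M Δ Aseq ω) :=
    fun ω => by linear_combination k ω * Jweight_mul_sub μ mH M Δ Aseq ptil (hA01 ω)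
  rw [integral_congr_ae (ae_of_all _ hsplit), integral_mul_sub_mul_eq_integral_condExp
    (hmn.trans hn) hA' hA01 (by fun_prop) (by fun_prop) hAPi h1APi
    (hint.congr (ae_of_all _ hsplit))]
  refine integral_eq_zero_of_ae ?_
  filter_upwards [hE1, hE0, hp] with ω h1 h0 hpω
  rw [h1, h0, Pi.zero_apply, div_mul_cancel₀ _ hpω.1.ne', div_mul_cancel₀ _ (sub_pos.2 hpω.2).ne',
    sub_self]

theorem marginal_integrand_eq {m0 : MeasurableSpace Ω} (μ : Measure Ω) (mH : MeasurableSpace Ω)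
    (M : ℕ → MeasurableSpace Ω) (Δ : ℕ) (Aseq : ℕ → Ω → ℝ) (ptil : Ω → ℝ) {A : Ω → ℝ} {ω : Ω}
    (hA : A ω = 0 ∨ A ω = 1) (b c y s : ℝ) :
    exp (-(A ω * b)) * (y - exp (c + A ω * b)) * Jweight μ mH M Δ A Aseq ptil ω *
        (A ω - ptil ω) * s
      = (ptil ω * (1 - ptil ω) * s * exp (-b) / (μ[A|mH]) ω * (A ω * (PiProd μ M Δ Aseq ω * y))
          - ptil ω * (1 - ptil ω) * s / (1 - (μ[A|mH]) ω) *
            ((1 - A ω) * (PiProd μ M Δ Aseq ω * y)))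
        - exp c * Jweight μ mH M Δ A Aseq ptil ω * (A ω - ptil ω) * s := by
  have hexp : exp (-(A ω * b)) * exp (c + A ω * b) = exp c := by
    rw [← exp_add]; ring_nf
  have hA1 : exp (-(A ω * b)) * A ω = exp (-b) * A ω := by rcases hA with h | h <;> simp [h]
  have hA0 : exp (-(A ω * b)) * (1 - A ω) = 1 - A ω := by rcases hA with h | h <;> simp [h]
  linear_combination (exp (-(A ω * b)) * y * s) * Jweight_mul_sub μ mH M Δ Aseq ptil hA
    - (Jweight μ mH M Δ A Aseq ptil ω * (A ω - ptil ω) * s) * hexp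
    + (y * s * ptil ω * (1 - ptil ω) * PiProd μ M Δ Aseq ω / (μ[A|mH]) ω) * hA1
    - (y * s * ptil ω * (1 - ptil ω) * PiProd μ M Δ Aseq ω / (1 - (μ[A|mH]) ω)) * hA0

theorem marginal_estimating_function_expectation
    {m0 : MeasurableSpace Ω} (μ : Measure Ω) [IsProbabilityMeasure μ]
    (Δ : ℕ) (hΔ : 1 ≤ Δ)
    (mS mH : MeasurableSpace Ω) (M : ℕ → MeasurableSpace Ω)
    (hSH : mS ≤ mH) (hHM : mH ≤ M 1)
    (hMmono : ∀ j k, 1 ≤ j → j ≤ k → k ≤ Δ → M j ≤ M k)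
    (hMΔ : M Δ = m0)
    (A : Ω → ℝ) (hA : Measurable[M 1] A) (hA01 : ∀ ω, A ω = 0 ∨ A ω = 1)
    (hp : ∀ᵐ ω ∂μ, 0 < (μ[A|mH]) ω ∧ (μ[A|mH]) ω < 1)
    (Aseq : ℕ → Ω → ℝ)
    (hAseq : ∀ j ∈ Finset.Icc 1 (Δ - 1), Measurable[M (j + 1)] (Aseq j))
    (hAseq01 : ∀ j ∈ Finset.Icc 1 (Δ - 1), ∀ ω, Aseq j ω = 0 ∨ Aseq j ω = 1)
    (δ : ℝ) (hδ : 0 < δ)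
    (hpj : ∀ j ∈ Finset.Icc 1 (Δ - 1), ∀ᵐ ω ∂μ, (μ[Aseq j|M j]) ω ≤ 1 - δ)
    (Y : Ω → ℝ)
    (ptil : Ω → ℝ) (hptilmeas : StronglyMeasurable[mS] ptil)
    (β : Ω → ℝ) (hβ : StronglyMeasurable[mS] β)
    (S : Ω → ℝ) (hS : StronglyMeasurable[mS] S)
    (c : Ω → ℝ) (hc : StronglyMeasurable[mH] c)
    (hint1 : Integrable (fun ω => A ω * PiProd μ M Δ Aseq ω * Y ω) μ)
    (hint0 : Integrable (fun ω => (1 - A ω) * PiProd μ M Δ Aseq ω * Y ω) μ)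
    (hintMain : Integrable (fun ω => exp (-(A ω * β ω)) *
      (Y ω - exp (c ω + A ω * β ω)) * Jweight μ mH M Δ A Aseq ptil ω *
      (A ω - ptil ω) * S ω) μ)
    (hintWork : Integrable (fun ω => exp (c ω) * Jweight μ mH M Δ A Aseq ptil ω *
      (A ω - ptil ω) * S ω) μ) :
    (∫ ω, exp (-(A ω * β ω)) * (Y ω - exp (c ω + A ω * β ω)) *
        Jweight μ mH M Δ A Aseq ptil ω * (A ω - ptil ω) * S ω ∂μ
      = ∫ ω, ptil ω * (1 - ptil ω) * S ω *
          (exp (-(β ω)) * ((μ[A|mH]) ω)⁻¹ *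
              (μ[(fun ω'' => A ω'' * PiProd μ M Δ Aseq ω'' * Y ω'')|mH]) ω -
            (1 - (μ[A|mH]) ω)⁻¹ *
              (μ[(fun ω'' => (1 - A ω'') * PiProd μ M Δ Aseq ω'' * Y ω'')|mH]) ω) ∂μ) ∧
    (∫ ω, exp (c ω) * Jweight μ mH M Δ A Aseq ptil ω * (A ω - ptil ω) * S ω ∂μ = 0) := by
  have hM1 : M 1 ≤ m0 := hMΔ ▸ hMmono 1 Δ le_rfl hΔ le_rfl
  obtain ⟨hPi, hPi1⟩ := integrable_and_condExp_PiProd_eq_one (μ := μ) hΔ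
    (fun j hj k hk hjk => hMmono j k hj.1 hjk hk.2) hMΔ.le hAseq hAseq01 hδ hpj
  have hptil' := hptilmeas.mono hSH
  have hβ' := hβ.mono hSH
  have hS' := hS.mono hSH
  have hwork : ∫ ω, exp (c ω) * Jweight μ mH M Δ A Aseq ptil ω * (A ω - ptil ω) * S ω ∂μ = 0 :=
    (integral_congr_ae (ae_of_all _ fun ω => by ring)).trans
      (integral_mul_Jweight_mul_sub_eq_zero (k := fun ω => exp (c ω) * S ω) hHM hM1
        hA.stronglyMeasurable hA01 hp (by fun_prop) hptil' hPi hPi1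
        (hintWork.congr (ae_of_all _ fun ω => by ring)))
  have hsplit := fun ω => marginal_integrand_eq μ mH M Δ Aseq ptil (hA01 ω) (β ω) (c ω) (Y ω) (S ω)
  have hint : Integrable (fun ω =>
      ptil ω * (1 - ptil ω) * S ω * exp (-β ω) / (μ[A|mH]) ω * (A ω * (PiProd μ M Δ Aseq ω * Y ω))
        - ptil ω * (1 - ptil ω) * S ω / (1 - (μ[A|mH]) ω) *
          ((1 - A ω) * (PiProd μ M Δ Aseq ω * Y ω))) μ :=
    (hintMain.add hintWork).congr (ae_of_all _ fun ω => by simp only [Pi.add_apply, hsplit]; ring)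
  refine ⟨?_, hwork⟩
  rw [integral_congr_ae (ae_of_all _ hsplit), integral_sub hint hintWork, hwork, sub_zero,
    integral_mul_sub_mul_eq_integral_condExp (hHM.trans hM1)
      (hA.mono hM1 le_rfl).aestronglyMeasurable hA01 (by fun_prop) (by fun_prop)
      (hint1.congr (ae_of_all _ fun ω => mul_assoc _ _ _))
      (hint0.congr (ae_of_all _ fun ω => mul_assoc _ _ _)) hint]
  refine integral_congr_ae (ae_of_all _ fun ω => ?_)
  simp only [mul_assoc]
  ring
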